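/- Descending chains do not merge (injectivity on the lower half of ranks): let u be a necklace of length n and k an integer with 2k > n and rank(u) ≤ k. Suppose v and v′ are necklaces of rank k with Lyndon representatives w and w′ respectively, each having exactly 2k − n unmatched positions, and suppose u = necklace of w_r and u = necklace of w′_r, where r = k − rank(u). Then v = v′. -/

import Mathlib

/-!
Common definitions: binary words of length `n`, rotations, necklaces (the quotient
poset `Bₙ/Cₙ`), the cyclic matching procedure, Lyndon words, the map `φ`,
crossing pairs, and the words `w_t`.

Throughout, a binary word of length `n` is a function `Fin n → Bool`, where `true`
encodes the letter `1` and `false` the letter `0`.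
-/

/-- A binary word of length `n`: `true` encodes the letter `1`, `false` the letter `0`. -/
abbrev Word (n : ℕ) := Fin n → Bool

variable {n : ℕ} [NeZero n]

/-- The rotation `σ_i`, shifting the letters of `w` cyclically by `i` positions (so the
letter at position `j` of `w` appears at position `j + i` of `rot i w`). -/
def rot (i : Fin n) (w : Word n) : Word n := fun j => w (j - i)

lemma rot_rot (i j : Fin n) (w : Word n) : rot i (rot j w) = rot (j + i) w := by
  funext k
  simp [rot, sub_sub, add_comm]

/-- Two words are equivalent when one is a cyclic rotation of the other. -/
def rotSetoid (n : ℕ) [NeZero n] : Setoid (Word n) where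
  r w w' := ∃ i : Fin n, rot i w = w'
  iseqv := by
    refine ⟨fun w => ⟨0, ?_⟩, ?_, ?_⟩
    · funext j; simp [rot]
    · rintro w w' ⟨i, rfl⟩
      refine ⟨-i, ?_⟩
      rw [rot_rot]
      funext j; simp [rot]
    · rintro w w' w'' ⟨i, rfl⟩ ⟨j, rfl⟩
      exact ⟨i + j, (rot_rot j i w).symm⟩

/-- A necklace: an equivalence class of binary words under cyclic rotation. -/
abbrev Necklace (n : ℕ) [NeZero n] := Quotient (rotSetoid n)

/-- The necklace of a word. -/
def nec (w : Word n) : Necklace n := Quotient.mk (rotSetoid n) w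

/-- The number of `1`s in a word. -/
def wt (w : Word n) : ℕ := (Finset.univ.filter fun i => w i = true).card

/-- The number of `0`s in a word. -/
def zeros (w : Word n) : ℕ := (Finset.univ.filter fun i => w i = false).card

/-- The rank of a necklace: the number of `1`s in any representative. -/
noncomputable def rank (u : Necklace n) : ℕ := wt (Quotient.out u)

/-- The set of positions belonging to some pair of `M`. -/
def matchedPos (M : Finset (Fin n × Fin n)) : Finset (Fin n) :=
  M.image Prod.fst ∪ M.image Prod.snd

/-- `j` is the first position outside `S` encountered strictly after `i` in the cyclic
order `i+1, i+2, …` (indices mod `n`). -/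
def FirstAfter (S : Finset (Fin n)) (i j : Fin n) : Prop :=
  j ∉ S ∧ j ≠ i ∧ ∀ k : Fin n, k ∉ S → k ≠ i → (j - i).val ≤ (k - i).val

/-- One step of the cyclic matching procedure on the word `w`: choose an as-yet-unmatched
position `i` carrying the letter `0` such that the first as-yet-unmatched position `j`
after `i` in cyclic order carries the letter `1`, and declare `{i, j}` a matched pair
(recorded as the ordered pair `(i, j)`, the `0`-position first). -/
inductive MatchStep (w : Word n) :
    Finset (Fin n × Fin n) → Finset (Fin n × Fin n) → Prop
  | step {M : Finset (Fin n × Fin n)} {i j : Fin n}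
      (hi : i ∉ matchedPos M) (hw : w i = false)
      (hj : FirstAfter (matchedPos M) i j) (hj1 : w j = true) :
      MatchStep w M (insert (i, j) M)

/-- A maximal execution of the cyclic matching procedure on `w`, starting from the empty
matching: `M` is reachable from `∅` by matching steps and no further step is possible. -/
def IsMaximalMatching (w : Word n) (M : Finset (Fin n × Fin n)) : Prop :=
  Relation.ReflTransGen (MatchStep w) ∅ M ∧ ∀ M', ¬ MatchStep w M M'

/-- The cyclic matching of `w`: the set of matched pairs produced by (any) maximal
execution of the cyclic matching procedure. -/
noncomputable def matching (w : Word n) : Finset (Fin n × Fin n) :=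
  letI := Classical.dec (∃ M, IsMaximalMatching w M)
  if h : ∃ M, IsMaximalMatching w M then h.choose else ∅

/-- The unmatched positions of `w`: positions belonging to no matched pair. -/
noncomputable def unmatchedPos (w : Word n) : Finset (Fin n) :=
  Finset.univ \ matchedPos (matching w)

/-- Lexicographic comparison of words with respect to the letter order `1 ≺ 0`
(recall `true` encodes `1` and `false` encodes `0`). -/
def lexLE (w w' : Word n) : Prop :=
  w = w' ∨ ∃ i : Fin n, (∀ j : Fin n, j < i → w j = w' j) ∧ w i = true ∧ w' i = false

/-- A word is Lyndon if it is lexicographically smallest among all of its rotations,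
with respect to the letter order `1 ≺ 0`. -/
def IsLyndon (w : Word n) : Prop := ∀ i : Fin n, lexLE w (rot i w)

/-- The Lyndon rearrangement of `w`: its lexicographically smallest rotation. -/
noncomputable def lyndonOf (w : Word n) : Word n :=
  letI := Classical.dec (∃ i : Fin n, IsLyndon (rot i w))
  if h : ∃ i : Fin n, IsLyndon (rot i w) then rot h.choose w else w

/-- Change the letter at the rightmost unmatched position of `w` to `0`. -/
noncomputable def flipTop (w : Word n) : Word n :=
  if h : (unmatchedPos w).Nonempty then
    Function.update w ((unmatchedPos w).max' h) false
  else w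

/-- The map `φ`: take the Lyndon rearrangement of a representative and change the letter
at its rightmost unmatched position (which carries a `1` on the upper half of ranks)
to `0`. -/
noncomputable def phi (u : Necklace n) : Necklace n :=
  nec (flipTop (lyndonOf (Quotient.out u)))

/-- `x` lies strictly inside the cyclic arc running from `i` (exclusive) to `k`
(exclusive), in the cyclic order of positions. -/
def StrictBtw (i x k : Fin n) : Prop :=
  0 < (x - i).val ∧ (x - i).val < (k - i).val

/-- The pairs `{i, k}` and `{j, l}` cross: exactly one of `j, l` lies strictly inside one
of the two cyclic arcs determined by `i` and `k`. -/
def Crosses (i k j l : Fin n) : Prop := Xor' (StrictBtw i j k) (StrictBtw i l k)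

/-- `wT w t` is the word obtained from `w` by changing the letters at the last `t`
unmatched positions of `w` to `0`; that is, if the unmatched positions of `w` are
`p₁ < … < p_m`, the positions `p_{m-t+1}, …, p_m` are changed to `0`. -/
noncomputable def wT (w : Word n) (t : ℕ) : Word n := fun j =>
  if j ∈ unmatchedPos w ∧ ((unmatchedPos w).filter fun k => j ≤ k).card ≤ t then false
  else w j

/-- The order on necklaces (the poset `Bₙ/Cₙ`): `u ≤ v` iff there are representatives
`w` of `u` and `w'` of `v` such that every position carrying `1` in `w` also carries `1`
in `w'`. -/
def nle (u v : Necklace n) : Prop :=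
  ∃ w w' : Word n, nec w = u ∧ nec w' = v ∧ ∀ i, w i = true → w' i = true

/-- The strict order on necklaces. -/
def nlt (u v : Necklace n) : Prop := nle u v ∧ u ≠ v

/-- `v` covers `u` in `Bₙ/Cₙ`: `u < v` and there is no `z` with `u < z < v`. -/
def ncovBy (u v : Necklace n) : Prop := nlt u v ∧ ∀ z, nlt u z → ¬ nlt z v

/-- A chain top: a necklace `v` in the upper half of ranks (`2·rank v ≥ n`) which is not
the image under `φ` of any necklace in the strict upper half of ranks. -/
def IsChainTop (v : Necklace n) : Prop :=
  n ≤ 2 * rank v ∧ ∀ u : Necklace n, n < 2 * rank u → phi u ≠ v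

/-- The `φ`-string below the chain top `v`: the necklaces of the words `w_t`,
`0 ≤ t ≤ m`, where `w` is the Lyndon representative of `v` and `m = 2·rank v − n`. -/
noncomputable def chainOf (v : Necklace n) : Set (Necklace n) :=
  { u | ∃ t ≤ 2 * rank v - n, u = nec (wT (lyndonOf (Quotient.out v)) t) }

/-!
Let `m = 2k - n`; all `m` unmatched positions of `w` carry `1`. The matching of `w_r` is that
of `w` together with `min r (m - r)` seam pairs, joining the flipped `0`s across the end of the
word to the first unmatched `1`s, innermost first. Matchings commute with rotations, so if
`σ_c (w_r) = w'_r`, the pairs of `w'_r` are those of `w_r` shifted by `c`.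

Let `T` be the set of flipped positions of `w` shifted by `c`, and `F'` that of `w'`. A position
`β ∈ F' \ T` is the `0` of a seam pair `(β, γ)` of `w'_r`, which wraps around the end of the
word. Shifted back by `c` it is a pair of the matching of `w`, and such a pair cannot wrap:
otherwise its endpoint `γ - c` would lie on the arcs of more pairs of `w_r` than `γ` lies on
arcs of pairs of `w'_r`. Hence `γ < c ≤ β`, and symmetrically every position of `T \ F'` lies
before `c`. If `T ≠ F'`, the first difference gives `σ_c w < w'`, and read from the origin of
`w` it gives `σ_{-c} w' < w`; with the Lyndon inequalities `w ≤ σ_c w` and `w' ≤ σ_{-c} w'`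
this is a cycle. So `T = F'`, which means `σ_c w = w'`.
-/

theorem Fin.val_sub_eq_ite {n : ℕ} (a b : Fin n) :
    (a - b : Fin n).val = if b ≤ a then a.val - b.val else n + a.val - b.val := by
  split_ifs with h
  · exact Fin.coe_sub_iff_le.2 h
  · exact Fin.coe_sub_iff_lt.2 (not_le.1 h)

section Rotation

lemma rot_zero (w : Word n) : rot 0 w = w := by
  funext j
  simp [rot]

lemma rot_neg_eq {c : Fin n} {x y : Word n} (h : rot c x = y) : rot (-c) y = x := by
  rw [← h, rot_rot, add_neg_cancel, rot_zero]

lemma rot_apply_add (c : Fin n) (w : Word n) (i : Fin n) : rot c w (i + c) = w i := by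
  simp [rot]

lemma nec_rot (c : Fin n) (w : Word n) : nec (rot c w) = nec w :=
  (Quotient.sound ⟨c, rfl⟩ : nec w = nec (rot c w)).symm

lemma wt_rot (c : Fin n) (w : Word n) : wt (rot c w) = wt w := by
  refine Finset.card_bij' (fun a _ => a - c) (fun a _ => a + c) ?_ ?_ (by simp) (by simp) <;>
    simp only [Finset.mem_filter, Finset.mem_univ, true_and]
  · exact fun a ha => ha
  · exact fun a ha => (rot_apply_add c w a).trans ha

lemma rank_nec (w : Word n) : rank (nec w) = wt w := by
  obtain ⟨c, hc⟩ : (rotSetoid n).r (nec w).out w := Quotient.exact (Quotient.out_eq (nec w))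
  rw [rank, ← wt_rot c, hc]

end Rotation

section Positions

omit [NeZero n]

lemma mem_matchedPos {M : Finset (Fin n × Fin n)} {z : Fin n} :
    z ∈ matchedPos M ↔ ∃ p ∈ M, p.1 = z ∨ p.2 = z := by
  simp only [matchedPos, Finset.mem_union, Finset.mem_image]
  grind

lemma fst_mem_matchedPos {M : Finset (Fin n × Fin n)} {p : Fin n × Fin n} (hp : p ∈ M) :
    p.1 ∈ matchedPos M :=
  mem_matchedPos.2 ⟨p, hp, .inl rfl⟩

lemma snd_mem_matchedPos {M : Finset (Fin n × Fin n)} {p : Fin n × Fin n} (hp : p ∈ M) :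
    p.2 ∈ matchedPos M :=
  mem_matchedPos.2 ⟨p, hp, .inr rfl⟩

lemma matchedPos_insert (p : Fin n × Fin n) (M : Finset (Fin n × Fin n)) :
    matchedPos (insert p M) = insert p.1 (insert p.2 (matchedPos M)) := by
  ext z
  simp only [mem_matchedPos, Finset.mem_insert]
  grind

lemma matchedPos_union (M N : Finset (Fin n × Fin n)) :
    matchedPos (M ∪ N) = matchedPos M ∪ matchedPos N := by
  ext z
  simp only [mem_matchedPos, Finset.mem_union]
  grind

/-- `z` lies on the cyclic arc running from `p.1` to `p.2`, endpoints included. -/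
def OnArc (p : Fin n × Fin n) (z : Fin n) : Prop := (z - p.1).val ≤ (p.2 - p.1).val

instance (p : Fin n × Fin n) (z : Fin n) : Decidable (OnArc p z) := Nat.decLe _ _

lemma onArc_of_le_of_lt {a b z : Fin n} (hzb : z ≤ b) (hba : b < a) : OnArc (a, b) z := by
  simp only [OnArc, Fin.val_sub_eq_ite]
  split_ifs <;> omega

lemma FirstAfter.mono {S S' : Finset (Fin n)} {i j : Fin n} (h : FirstAfter S i j)
    (hS : S ⊆ S') (hj : j ∉ S') : FirstAfter S' i j :=
  ⟨hj, h.2.1, fun k hk hki => h.2.2 k (fun hkS => hk (hS hkS)) hki⟩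

lemma FirstAfter.ne_of_ne {S : Finset (Fin n)} {i i' j j' : Fin n} (h : FirstAfter S i j)
    (h' : FirstAfter S i' j') (hi : i ∉ S) (hi' : i' ∉ S) (hii' : i ≠ i') (hji' : j ≠ i') :
    j ≠ j' := by
  rintro rfl
  have e₁ := h.2.2 i' hi' hii'.symm
  have e₂ := h'.2.2 i hi hii'
  have hji := h.2.1
  simp only [Fin.val_sub_eq_ite] at e₁ e₂
  split_ifs at e₁ e₂ <;> omega

def shiftPairs (c : Fin n) (M : Finset (Fin n × Fin n)) : Finset (Fin n × Fin n) :=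
  M.image fun p => (p.1 + c, p.2 + c)

lemma shiftPairs_insert (c : Fin n) (p : Fin n × Fin n) (M : Finset (Fin n × Fin n)) :
    shiftPairs c (insert p M) = insert (p.1 + c, p.2 + c) (shiftPairs c M) :=
  Finset.image_insert _ _ _

end Positions

section Shift

lemma mem_shiftPairs {c : Fin n} {M : Finset (Fin n × Fin n)} {p : Fin n × Fin n} :
    p ∈ shiftPairs c M ↔ (p.1 - c, p.2 - c) ∈ M := by
  simp only [shiftPairs, Finset.mem_image]
  constructor
  · rintro ⟨q, hq, rfl⟩
    simpa using hq
  · intro h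
    exact ⟨_, h, by simp⟩

lemma shiftPairs_shiftPairs (c d : Fin n) (M : Finset (Fin n × Fin n)) :
    shiftPairs d (shiftPairs c M) = shiftPairs (c + d) M := by
  simp only [shiftPairs, Finset.image_image]
  congr 1
  funext p
  simp [add_assoc]

lemma shiftPairs_zero (M : Finset (Fin n × Fin n)) : shiftPairs 0 M = M := by
  simp [shiftPairs]

lemma mem_matchedPos_shiftPairs {c : Fin n} {M : Finset (Fin n × Fin n)} {z : Fin n} :
    z ∈ matchedPos (shiftPairs c M) ↔ z - c ∈ matchedPos M := by
  simp only [mem_matchedPos, shiftPairs, Finset.exists_mem_image]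
  grind

lemma onArc_add {p : Fin n × Fin n} {z c : Fin n} :
    OnArc (p.1 + c, p.2 + c) (z + c) ↔ OnArc p z := by
  simp [OnArc]

lemma card_filter_onArc_shiftPairs (c : Fin n) (M : Finset (Fin n × Fin n)) (z : Fin n) :
    ((shiftPairs c M).filter (OnArc · (z + c))).card = (M.filter (OnArc · z)).card := by
  rw [shiftPairs, Finset.filter_image, Finset.card_image_of_injective]
  · simp only [onArc_add]
  · intro p q h
    simpa [Prod.ext_iff] using h

end Shift

section Procedure

omit [NeZero n]

structure IsCyclicMatching (w : Word n) (M : Finset (Fin n × Fin n)) : Prop where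
  letters : ∀ p ∈ M, w p.1 = false ∧ w p.2 = true
  injOn_fst : Set.InjOn Prod.fst (M : Set (Fin n × Fin n))
  injOn_snd : Set.InjOn Prod.snd (M : Set (Fin n × Fin n))
  not_onArc : ∀ p ∈ M, ∀ z ∉ matchedPos M, ¬ OnArc p z

lemma IsCyclicMatching.card_matchedPos {w : Word n} {M : Finset (Fin n × Fin n)}
    (h : IsCyclicMatching w M) : (matchedPos M).card = 2 * M.card := by
  have hdisj : Disjoint (M.image Prod.fst) (M.image Prod.snd) := by
    rw [Finset.disjoint_left]
    rintro _ hz₁ hz₂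
    obtain ⟨p, hp, rfl⟩ := Finset.mem_image.1 hz₁
    obtain ⟨q, hq, hqp⟩ := Finset.mem_image.1 hz₂
    have := (h.letters p hp).1
    have := (h.letters q hq).2
    simp_all
  rw [matchedPos, Finset.card_union_of_disjoint hdisj, Finset.card_image_of_injOn h.injOn_fst,
    Finset.card_image_of_injOn h.injOn_snd, two_mul]

lemma MatchStep.card_lt {w : Word n} {M N : Finset (Fin n × Fin n)} (h : MatchStep w M N) :
    M.card < N.card := by
  rcases h with @⟨i, j, hi, -, -, -⟩
  exact Finset.card_lt_card (Finset.ssubset_insert fun h => hi (fst_mem_matchedPos h))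

lemma exists_isMaximalMatching (w : Word n) : ∃ M, IsMaximalMatching w M := by
  classical
  obtain ⟨M, hM, hmax⟩ := (Finset.univ.filter (Relation.ReflTransGen (MatchStep w) ∅)).exists_max_image
    Finset.card ⟨∅, Finset.mem_filter.2 ⟨Finset.mem_univ _, .refl⟩⟩
  have hM := (Finset.mem_filter.1 hM).2
  refine ⟨M, hM, fun N hN => ?_⟩
  exact (hmax N (Finset.mem_filter.2 ⟨Finset.mem_univ _, hM.tail hN⟩)).not_gt hN.card_lt

lemma isMaximalMatching_matching (w : Word n) : IsMaximalMatching w (matching w) := by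
  rw [matching, dif_pos (exists_isMaximalMatching w)]
  exact (exists_isMaximalMatching w).choose_spec

lemma matchStep_insert_insert {w : Word n} {M : Finset (Fin n × Fin n)} {i j a b : Fin n}
    (hi : i ∉ matchedPos M) (hw : w i = false) (hj : FirstAfter (matchedPos M) i j)
    (hj1 : w j = true) (hia : i ≠ a) (hib : i ≠ b) (hja : j ≠ a) (hjb : j ≠ b) :
    MatchStep w (insert (a, b) M) (insert (i, j) (insert (a, b) M)) := by
  refine .step ?_ hw (hj.mono ?_ ?_) hj1 <;> rw [matchedPos_insert]
  · simp [hia, hib, hi]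
  · exact (Finset.subset_insert _ _).trans (Finset.subset_insert _ _)
  · simp [hja, hjb, hj.1]

end Procedure

section Confluence

lemma FirstAfter.eq {S : Finset (Fin n)} {i j j' : Fin n} (h : FirstAfter S i j)
    (h' : FirstAfter S i j') : j = j' :=
  sub_left_inj.1 (Fin.ext (le_antisymm (h.2.2 j' h'.1 h'.2.1) (h'.2.2 j h.1 h.2.1)))

lemma FirstAfter.not_onArc {S : Finset (Fin n)} {i j z : Fin n} (h : FirstAfter S i j)
    (hz : z ∉ S) (hzi : z ≠ i) (hzj : z ≠ j) : ¬ OnArc (i, j) z := fun hon =>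
  hzj (sub_left_inj.1 (Fin.ext (le_antisymm hon (h.2.2 z hz hzi))))

lemma IsCyclicMatching.step {w : Word n} {M N : Finset (Fin n × Fin n)}
    (hM : IsCyclicMatching w M) (hs : MatchStep w M N) : IsCyclicMatching w N := by
  rcases hs with @⟨i, j, hi, hw, hj, hj1⟩
  have hnew : (i, j) ∉ (M : Set (Fin n × Fin n)) := fun h => hi (fst_mem_matchedPos h)
  refine ⟨Finset.forall_mem_insert _ _ _ |>.2 ⟨⟨hw, hj1⟩, hM.letters⟩, ?_, ?_, ?_⟩
  · rw [Finset.coe_insert, Set.injOn_insert hnew]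
    exact ⟨hM.injOn_fst, fun ⟨q, hq, hqi⟩ =>
      hi (by rw [← show q.1 = i from hqi]; exact fst_mem_matchedPos hq)⟩
  · rw [Finset.coe_insert, Set.injOn_insert hnew]
    exact ⟨hM.injOn_snd, fun ⟨q, hq, hqj⟩ =>
      hj.1 (by rw [← show q.2 = j from hqj]; exact snd_mem_matchedPos hq)⟩
  · intro p hp z hz
    simp only [matchedPos_insert, Finset.mem_insert, not_or] at hz
    obtain ⟨hzi, hzj, hzM⟩ := hz
    rcases Finset.mem_insert.1 hp with rfl | hp
    · exact hj.not_onArc hzM hzi hzj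
    · exact hM.not_onArc p hp z hzM

lemma IsCyclicMatching.of_reachable {w : Word n} {M : Finset (Fin n × Fin n)}
    (h : Relation.ReflTransGen (MatchStep w) ∅ M) : IsCyclicMatching w M := by
  induction h with
  | refl => exact ⟨by simp, by simp, by simp, by simp⟩
  | tail _ hs ih => exact ih.step hs

lemma isCyclicMatching_matching (w : Word n) : IsCyclicMatching w (matching w) :=
  .of_reachable (isMaximalMatching_matching w).1

lemma card_unmatchedPos (w : Word n) :
    (unmatchedPos w).card = n - 2 * (matching w).card := by
  rw [unmatchedPos, Finset.card_sdiff_of_subset (Finset.subset_univ _), Finset.card_univ,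
    Fintype.card_fin, (isCyclicMatching_matching w).card_matchedPos]

lemma eq_true_of_mem_unmatchedPos {w : Word n} (hwt : n ≤ 2 * wt w)
    (hm : (unmatchedPos w).card = 2 * wt w - n) {z : Fin n} (hz : z ∈ unmatchedPos w) :
    w z = true := by
  have hM := isCyclicMatching_matching w
  have hsub : (matching w).image Prod.fst ⊆ Finset.univ.filter (w · = false) := by
    intro z hz
    obtain ⟨p, hp, rfl⟩ := Finset.mem_image.1 hz
    simpa using (hM.letters p hp).1
  -- every `0` is the first position of a pair, since there are as many pairs as `0`s
  have hcard : (Finset.univ.filter (w · = false)).card ≤ ((matching w).image Prod.fst).card := by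
    have hones := Finset.card_filter_add_card_filter_not (s := Finset.univ) (w · = true)
    have hpos := Finset.card_le_univ (matchedPos (matching w))
    simp only [Bool.not_eq_true, Finset.card_univ, Fintype.card_fin] at hones hpos
    rw [Finset.card_image_of_injOn hM.injOn_fst]
    have := card_unmatchedPos w
    rw [hM.card_matchedPos] at hpos
    unfold wt at hwt hm
    omega
  by_contra hzf
  have hz0 : z ∈ Finset.univ.filter (w · = false) := by simpa using hzf
  rw [← Finset.eq_of_subset_of_card_le hsub hcard] at hz0
  obtain ⟨p, hp, rfl⟩ := Finset.mem_image.1 hz0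
  exact (Finset.mem_sdiff.1 hz).2 (fst_mem_matchedPos hp)

lemma MatchStep.diamond {w : Word n} {M M₁ M₂ : Finset (Fin n × Fin n)}
    (h₁ : MatchStep w M M₁) (h₂ : MatchStep w M M₂) :
    M₁ = M₂ ∨ ∃ M₃, MatchStep w M₁ M₃ ∧ MatchStep w M₂ M₃ := by
  rcases h₁ with @⟨i, j, hi, hw, hj, hj1⟩
  rcases h₂ with @⟨i', j', hi', hw', hj', hj1'⟩
  by_cases hii' : i = i'
  · subst hii'
    rw [hj.eq hj']
    exact .inl rfl
  have hne : ∀ {a b : Fin n}, w a = false → w b = true → a ≠ b := fun ha hb hab => by simp_all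
  have hjj' : j ≠ j' := hj.ne_of_ne hj' hi hi' hii' (hne hw' hj1).symm
  refine .inr ⟨insert (i', j') (insert (i, j) M), matchStep_insert_insert hi' hw' hj' hj1'
    (Ne.symm hii') (hne hw' hj1) (hne hw hj1').symm hjj'.symm, ?_⟩
  rw [Finset.insert_comm]
  exact matchStep_insert_insert hi hw hj hj1 hii' (hne hw hj1') (hne hw' hj1).symm hjj'

lemma IsMaximalMatching.eq {w : Word n} {M₁ M₂ : Finset (Fin n × Fin n)}
    (h₁ : IsMaximalMatching w M₁) (h₂ : IsMaximalMatching w M₂) : M₁ = M₂ := by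
  have stuck : ∀ {N N'}, (∀ N'', ¬ MatchStep w N N'') →
      Relation.ReflTransGen (MatchStep w) N N' → N = N' := fun hN hNN' =>
    hNN'.cases_head.elim id fun ⟨_, h, _⟩ => absurd h (hN _)
  have confluent : ∀ a b c, MatchStep w a b → MatchStep w a c →
      ∃ d, Relation.ReflGen (MatchStep w) b d ∧ Relation.ReflTransGen (MatchStep w) c d := by
    intro a b c hab hac
    rcases hab.diamond hac with rfl | ⟨d, hbd, hcd⟩
    · exact ⟨_, .refl, .refl⟩
    · exact ⟨d, .single hbd, .single hcd⟩
  obtain ⟨M, hM₁, hM₂⟩ := Relation.church_rosser confluent h₁.1 h₂.1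
  rw [stuck h₁.2 hM₁, stuck h₂.2 hM₂]

lemma matching_eq {w : Word n} {M : Finset (Fin n × Fin n)} (h : IsMaximalMatching w M) :
    matching w = M :=
  (isMaximalMatching_matching w).eq h

end Confluence

section RotationInvariance

lemma MatchStep.shift {w : Word n} {M N : Finset (Fin n × Fin n)} (c : Fin n)
    (h : MatchStep w M N) : MatchStep (rot c w) (shiftPairs c M) (shiftPairs c N) := by
  rcases h with @⟨i, j, hi, hw, ⟨hjS, hji, hjmin⟩, hj1⟩
  rw [shiftPairs_insert]
  refine .step ?_ ?_ ⟨?_, ?_, fun k hk hki => ?_⟩ ?_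
  · simpa [mem_matchedPos_shiftPairs] using hi
  · simpa [rot] using hw
  · simpa [mem_matchedPos_shiftPairs] using hjS
  · simpa using hji
  · have := hjmin (k - c) (by simpa [mem_matchedPos_shiftPairs] using hk)
      (fun h => hki (by simp [← h]))
    rwa [add_sub_add_right_eq_sub, sub_add_eq_sub_sub, sub_right_comm]
  · simpa [rot] using hj1

lemma IsMaximalMatching.shift {w : Word n} {M : Finset (Fin n × Fin n)} (c : Fin n)
    (h : IsMaximalMatching w M) : IsMaximalMatching (rot c w) (shiftPairs c M) := by
  refine ⟨?_, fun N hN => h.2 (shiftPairs (-c) N) ?_⟩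
  · have reach : ∀ {N}, Relation.ReflTransGen (MatchStep w) ∅ N →
        Relation.ReflTransGen (MatchStep (rot c w)) ∅ (shiftPairs c N) := by
      intro N hN
      induction hN with
      | refl => simpa [shiftPairs] using .refl
      | tail _ hs ih => exact ih.tail (hs.shift c)
    exact reach h.1
  · simpa [rot_rot, shiftPairs_shiftPairs, shiftPairs_zero, rot_zero] using hN.shift (-c)

lemma matching_rot (c : Fin n) (w : Word n) : matching (rot c w) = shiftPairs c (matching w) :=
  matching_eq ((isMaximalMatching_matching w).shift c)

lemma mem_unmatchedPos_rot {c : Fin n} {w : Word n} {z : Fin n} :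
    z ∈ unmatchedPos (rot c w) ↔ z - c ∈ unmatchedPos w := by
  simp [unmatchedPos, matching_rot, mem_matchedPos_shiftPairs]

end RotationInvariance

section Enumeration

omit [NeZero n]

variable {U : Finset (Fin n)} {m : ℕ} {P : ℕ → Fin n}

structure IsSortedEnum (U : Finset (Fin n)) (m : ℕ) (P : ℕ → Fin n) : Prop where
  lt : ∀ ⦃i j⦄, i < j → j < m → P i < P j
  mem : ∀ ⦃i⦄, i < m → P i ∈ U
  exists_eq : ∀ z ∈ U, ∃ i < m, P i = z

lemma exists_isSortedEnum [NeZero n] (U : Finset (Fin n)) : ∃ P, IsSortedEnum U U.card P := by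
  let e := U.orderIsoOfFin rfl
  refine ⟨fun i => if h : i < U.card then (e ⟨i, h⟩ : Fin n) else 0,
    ⟨fun i j hij hj => ?_, fun i hi => ?_, fun z hz => ⟨e.symm ⟨z, hz⟩, (e.symm ⟨z, hz⟩).2, ?_⟩⟩⟩
  · simp only [dif_pos hj, dif_pos (hij.trans hj)]
    exact e.strictMono (show (⟨i, hij.trans hj⟩ : Fin U.card) < ⟨j, hj⟩ from hij)
  · simp only [dif_pos hi]
    exact (e _).2
  · simp

lemma IsSortedEnum.injective (hP : IsSortedEnum U m P) {i j : ℕ} (hi : i < m) (hj : j < m)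
    (h : P i = P j) : i = j := by
  by_contra hne
  rcases Nat.lt_or_gt_of_ne hne with hij | hij
  · exact (hP.lt hij hj).ne h
  · exact (hP.lt hij hi).ne h.symm

lemma IsSortedEnum.le (hP : IsSortedEnum U m P) {i j : ℕ} (hij : i ≤ j) (hj : j < m) :
    P i ≤ P j :=
  hij.eq_or_lt.elim (fun h => h ▸ le_rfl) fun h => (hP.lt h hj).le

lemma IsSortedEnum.card_filter_le (hP : IsSortedEnum U m P) {i : ℕ} (hi : i < m) :
    (U.filter (P i ≤ ·)).card = m - i := by
  have : U.filter (P i ≤ ·) = (Finset.Ico i m).image P := by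
    ext z
    simp only [Finset.mem_filter, Finset.mem_image, Finset.mem_Ico]
    constructor
    · rintro ⟨hz, hiz⟩
      obtain ⟨j, hj, rfl⟩ := hP.exists_eq z hz
      exact ⟨j, ⟨not_lt.1 fun hji => (hP.lt hji hi).not_ge hiz, hj⟩, rfl⟩
    · rintro ⟨j, ⟨hij, hj⟩, rfl⟩
      exact ⟨hP.mem hj, hP.le hij hj⟩
  rw [this, Finset.card_image_of_injOn fun a ha b hb =>
    hP.injective (Finset.mem_Ico.1 ha).2 (Finset.mem_Ico.1 hb).2, Nat.card_Ico]

end Enumeration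

section Flip

omit [NeZero n]

variable {w : Word n} {t : ℕ} {z : Fin n}

/-- The positions whose letters `wT w t` changes: the last `t` unmatched positions of `w`. -/
noncomputable def flipSet (w : Word n) (t : ℕ) : Finset (Fin n) :=
  (unmatchedPos w).filter fun j => ((unmatchedPos w).filter fun k => j ≤ k).card ≤ t

lemma wT_apply (w : Word n) (t : ℕ) (z : Fin n) :
    wT w t z = if z ∈ flipSet w t then false else w z := by
  simp only [wT, flipSet, Finset.mem_filter]

lemma flipSet_subset_unmatchedPos : flipSet w t ⊆ unmatchedPos w :=
  Finset.filter_subset _ _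

lemma wT_eq_false_of_mem_flipSet (h : z ∈ flipSet w t) : wT w t z = false := by
  simp [wT_apply, h]

lemma mem_flipSet_of_wT_eq_false (hone : ∀ z ∈ unmatchedPos w, w z = true)
    (hz : z ∈ unmatchedPos w) (h : wT w t z = false) : z ∈ flipSet w t := by
  by_contra h'
  simp [wT_apply, h', hone z hz] at h

lemma IsSortedEnum.mem_flipSet_iff {m : ℕ} {P : ℕ → Fin n}
    (hP : IsSortedEnum (unmatchedPos w) m P) {i : ℕ} (hi : i < m) :
    P i ∈ flipSet w t ↔ m - t ≤ i := by
  simp only [flipSet, Finset.mem_filter, hP.mem hi, hP.card_filter_le hi, true_and]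
  omega

def fillOnes (x : Word n) (A : Finset (Fin n)) : Word n := fun z => x z || decide (z ∈ A)

lemma fillOnes_wT (hone : ∀ z ∈ unmatchedPos w, w z = true) (t : ℕ) :
    fillOnes (wT w t) (flipSet w t) = w := by
  funext z
  by_cases h : z ∈ flipSet w t
  · simp [fillOnes, h, hone z (flipSet_subset_unmatchedPos h)]
  · simp [fillOnes, wT_apply, h]

lemma mem_image_add_iff [NeZero n] {A : Finset (Fin n)} {c : Fin n} : z ∈ A.image (· + c) ↔ z - c ∈ A :=
  ⟨fun h => by obtain ⟨y, hy, rfl⟩ := Finset.mem_image.1 h; simpa using hy,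
    fun h => Finset.mem_image.2 ⟨z - c, h, sub_add_cancel z c⟩⟩

lemma rot_fillOnes [NeZero n] (c : Fin n) (x : Word n) (A : Finset (Fin n)) :
    rot c (fillOnes x A) = fillOnes (rot c x) (A.image (· + c)) := by
  funext z
  simp only [rot, fillOnes, mem_image_add_iff]

lemma wt_fillOnes {x : Word n} {A : Finset (Fin n)} (hA : ∀ z ∈ A, x z = false) :
    wt (fillOnes x A) = wt x + A.card := by
  have hdisj : Disjoint (Finset.univ.filter fun i => x i = true) A :=
    Finset.disjoint_left.2 fun z hz hzA => by simp [hA z hzA] at hz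
  rw [wt, wt, ← Finset.card_union_of_disjoint hdisj]
  congr 1
  ext z
  simp [fillOnes]

end Flip

section Seam

omit [NeZero n]

variable {U : Finset (Fin n)} {m s : ℕ} {P : ℕ → Fin n}

/-- Pairs joining the two ends of the list `P 0, …, P (m - 1)` across the end of the word,
innermost first. -/
def seam (P : ℕ → Fin n) (m s : ℕ) : Finset (Fin n × Fin n) :=
  (Finset.range s).image fun t => (P (m - 1 - t), P t)

lemma mem_seam {p : Fin n × Fin n} : p ∈ seam P m s ↔ ∃ t < s, (P (m - 1 - t), P t) = p := by
  simp [seam]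

lemma IsSortedEnum.card_seam (hP : IsSortedEnum U m P) (hs : 2 * s ≤ m) :
    (seam P m s).card = s := by
  rw [seam, Finset.card_image_of_injOn, Finset.card_range]
  intro a ha b hb h
  simp only [Finset.coe_range, Set.mem_Iio] at ha hb
  exact hP.injective (by omega) (by omega) (Prod.ext_iff.1 h).2

lemma IsSortedEnum.not_mem_matchedPos_union_seam {M : Finset (Fin n × Fin n)}
    (hP : IsSortedEnum U m P) (hM : ∀ z, z ∈ matchedPos M ↔ z ∉ U) (hs : 2 * s ≤ m) {z : Fin n} :
    z ∉ matchedPos (M ∪ seam P m s) ↔ ∃ τ, s ≤ τ ∧ τ < m - s ∧ P τ = z := by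
  simp only [matchedPos_union, Finset.mem_union, hM, mem_matchedPos, mem_seam, not_or,
    not_not, not_exists, not_and]
  constructor
  · rintro ⟨hz, hseam⟩
    obtain ⟨τ, hτ, rfl⟩ := hP.exists_eq z hz
    refine ⟨τ, not_lt.1 fun h => ?_, not_le.1 fun h => ?_, rfl⟩
    · exact (hseam _ ⟨τ, h, rfl⟩).2 rfl
    · exact (hseam _ ⟨m - 1 - τ, by omega, rfl⟩).1 (by rw [show m - 1 - (m - 1 - τ) = τ by omega])
  · rintro ⟨τ, h₁, h₂, rfl⟩
    refine ⟨hP.mem (by omega), ?_⟩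
    rintro _ ⟨t, ht, rfl⟩
    constructor <;> intro h <;> have := hP.injective (by omega) (by omega) h <;> omega

lemma IsSortedEnum.matchStep_seam {x : Word n} {M : Finset (Fin n × Fin n)}
    (hP : IsSortedEnum U m P) (hM : ∀ z, z ∈ matchedPos M ↔ z ∉ U) (hs : 2 * s + 2 ≤ m)
    (h₀ : x (P (m - 1 - s)) = false) (h₁ : x (P s) = true) :
    MatchStep x (M ∪ seam P m s) (M ∪ seam P m (s + 1)) := by
  have hnext : M ∪ seam P m (s + 1) = insert (P (m - 1 - s), P s) (M ∪ seam P m s) := by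
    rw [seam, Finset.range_add_one, Finset.image_insert, Finset.union_insert, seam]
  have hfree := fun {z} => hP.not_mem_matchedPos_union_seam hM (s := s) (z := z) (by omega)
  rw [hnext]
  refine .step (hfree.2 ⟨m - 1 - s, by omega, by omega, rfl⟩) h₀
    ⟨hfree.2 ⟨s, le_rfl, by omega, rfl⟩, fun h => ?_, fun k hk hks => ?_⟩ h₁
  · have := hP.injective (by omega) (by omega) h
    omega
  · obtain ⟨τ, hτ₁, hτ₂, rfl⟩ := hfree.1 hk
    have hτ : τ < m - 1 - s := lt_of_le_of_ne (by omega) fun h => hks (h ▸ rfl)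
    have e₁ := hP.le hτ₁ (by omega)
    have e₂ := hP.lt hτ (by omega)
    simp only [Fin.val_sub_eq_ite]
    split_ifs <;> omega

lemma reachable_of_eqOn {w x : Word n} {M : Finset (Fin n × Fin n)}
    (h : Relation.ReflTransGen (MatchStep w) ∅ M) (hx : ∀ z ∈ matchedPos M, x z = w z) :
    Relation.ReflTransGen (MatchStep x) ∅ M := by
  induction h with
  | refl => exact .refl
  | tail _ hs ih =>
    rcases hs with @⟨i, j, hi, hw, hj, hj1⟩
    simp only [matchedPos_insert, Finset.mem_insert, forall_eq_or_imp] at hx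
    exact (ih hx.2.2).tail (.step hi (hx.1.trans hw) hj (hx.2.1.trans hj1))

lemma not_matchStep_of_forall_eq {x : Word n} {M N : Finset (Fin n × Fin n)} {b : Bool}
    (h : ∀ z ∉ matchedPos M, x z = b) : ¬ MatchStep x M N := by
  rintro @⟨i, j, hi, hw, hj, hj1⟩
  rw [h i hi] at hw
  rw [h j hj.1, hw] at hj1
  exact Bool.false_ne_true hj1

end Seam

section FlippedMatching

variable {w : Word n} {m : ℕ} {P : ℕ → Fin n}

theorem IsSortedEnum.matching_wT (hP : IsSortedEnum (unmatchedPos w) m P)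
    (hone : ∀ z ∈ unmatchedPos w, w z = true) (r : ℕ) :
    matching (wT w r) = matching w ∪ seam P m (min r (m - r)) := by
  have hM : ∀ z, z ∈ matchedPos (matching w) ↔ z ∉ unmatchedPos w := by simp [unmatchedPos]
  have hletter : ∀ i < m, wT w r (P i) = decide (i < m - r) := fun i hi => by
    by_cases h : m - r ≤ i
    · simp [wT_apply, (hP.mem_flipSet_iff hi).2 h, h]
    · simp [wT_apply, mt (hP.mem_flipSet_iff hi).1 h, hone _ (hP.mem hi), not_le.1 h]
  have hagree : ∀ z ∈ matchedPos (matching w), wT w r z = w z := fun z hz => by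
    rw [wT_apply, if_neg fun h => (hM z).1 hz (flipSet_subset_unmatchedPos h)]
  apply matching_eq
  refine ⟨?_, fun _ => not_matchStep_of_forall_eq (b := decide (r ≤ m - r)) fun z hz => ?_⟩
  · have reach : ∀ t ≤ min r (m - r),
        Relation.ReflTransGen (MatchStep (wT w r)) ∅ (matching w ∪ seam P m t) := by
      intro t
      induction t with
      | zero => simpa [seam] using reachable_of_eqOn (isMaximalMatching_matching w).1 hagree
      | succ t ih =>
        intro ht
        refine (ih (by omega)).tail (hP.matchStep_seam hM (by omega) ?_ ?_) <;>
          rw [hletter _ (by omega)] <;>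
          simp only [decide_eq_true_eq, decide_eq_false_iff_not, not_lt] <;> omega
    exact reach _ le_rfl
  · -- the positions left unmatched are all `1`s if `r ≤ m - r`, and all `0`s otherwise
    obtain ⟨τ, h₁, h₂, rfl⟩ := (hP.not_mem_matchedPos_union_seam hM (by omega)).1 hz
    rw [hletter τ (by omega), decide_eq_decide]
    omega

lemma unmatchedPos_wT_subset (hone : ∀ z ∈ unmatchedPos w, w z = true) (r : ℕ) :
    unmatchedPos (wT w r) ⊆ unmatchedPos w := by
  obtain ⟨P, hP⟩ := exists_isSortedEnum (unmatchedPos w)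
  intro z
  simp only [unmatchedPos, hP.matching_wT hone r, matchedPos_union, Finset.mem_sdiff,
    Finset.mem_union, not_or]
  exact fun h => ⟨h.1, h.2.1⟩

end FlippedMatching

section Lex

omit [NeZero n]

def LexLT (a b : Word n) : Prop :=
  ∃ i : Fin n, (∀ j < i, a j = b j) ∧ a i = true ∧ b i = false

lemma LexLT.irrefl (a : Word n) : ¬ LexLT a a := fun ⟨i, _, h₁, h₂⟩ => by simp_all

lemma LexLT.trans {a b c : Word n} (h₁ : LexLT a b) (h₂ : LexLT b c) : LexLT a c := by
  obtain ⟨i, hab, ha, hb⟩ := h₁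
  obtain ⟨j, hbc, hb', hc⟩ := h₂
  rcases lt_trichotomy i j with h | rfl | h
  · exact ⟨i, fun k hk => (hab k hk).trans (hbc k (hk.trans h)), ha, (hbc i h).symm.trans hb⟩
  · exact ⟨i, fun k hk => (hab k hk).trans (hbc k hk), ha, hc⟩
  · exact ⟨j, fun k hk => (hab k (hk.trans h)).trans (hbc k hk), (hab j h).trans hb', hc⟩

lemma lexLE.trans_lexLT {a b c : Word n} (h₁ : lexLE a b) (h₂ : LexLT b c) : LexLT a c :=
  h₁.elim (· ▸ h₂) (LexLT.trans · h₂)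

lemma LexLT.trans_lexLE {a b c : Word n} (h₁ : LexLT a b) (h₂ : lexLE b c) : LexLT a c :=
  h₂.elim (· ▸ h₁) h₁.trans

lemma lexLT_fillOnes {x : Word n} {A B : Finset (Fin n)} (hA : ∀ z ∈ A, x z = false)
    (hne : (A \ B).Nonempty) (hsep : ∀ y ∈ A \ B, ∀ z ∈ B \ A, y < z) :
    LexLT (fillOnes x A) (fillOnes x B) := by
  have hi := (A \ B).min'_mem hne
  refine ⟨(A \ B).min' hne, fun j hj => ?_, ?_, ?_⟩
  · have hjAB : j ∉ A \ B := fun h => ((A \ B).min'_le j h).not_gt hj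
    have hjBA : j ∉ B \ A := fun h => (hsep _ hi j h).not_gt hj
    simp only [Finset.mem_sdiff, not_and, not_not] at hjAB hjBA
    by_cases hjA : j ∈ A <;> by_cases hjB : j ∈ B <;> simp_all [fillOnes]
  · simp [fillOnes, (Finset.mem_sdiff.1 hi).1]
  · simp [fillOnes, (Finset.mem_sdiff.1 hi).2, hA _ (Finset.mem_sdiff.1 hi).1]

end Lex

section Rigidity

variable {w₁ w₂ : Word n} {r m s : ℕ} {P Q : ℕ → Fin n} {c : Fin n}

/-- If `(a, b)` wrapped around the end of the word, `b` would lie on the arcs of all seam pairs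
of `w₁` and of `(a, b)`, while `b + c` lies on the arcs of seam pairs of `w₂` only. -/
lemma lt_of_mem_matching_of_shiftPairs_eq (hP : IsSortedEnum (unmatchedPos w₁) m P)
    (hQ : IsSortedEnum (unmatchedPos w₂) m Q) (hs : 2 * s ≤ m)
    (hshift : matching w₂ ∪ seam Q m s = shiftPairs c (matching w₁ ∪ seam P m s))
    {a b : Fin n} (hab : (a, b) ∈ matching w₁) (hb : b + c ∈ unmatchedPos w₂) : a < b := by
  have hM₁ := isCyclicMatching_matching w₁
  refine lt_of_not_ge fun hba => ?_
  have hba : b < a := lt_of_le_of_ne hba fun h => by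
    have := hM₁.letters _ hab
    simp_all
  have hbU : ∀ u ∈ unmatchedPos w₁, b < u := fun u hu => not_le.1 fun hub =>
    hM₁.not_onArc _ hab u (Finset.mem_sdiff.1 hu).2 (onArc_of_le_of_lt hub hba)
  have hcover₁ : insert (a, b) (seam P m s) ⊆ (matching w₁ ∪ seam P m s).filter (OnArc · b) := by
    intro p hp
    rcases Finset.mem_insert.1 hp with rfl | hp
    · exact Finset.mem_filter.2 ⟨Finset.mem_union_left _ hab, le_rfl⟩
    · obtain ⟨t, ht, rfl⟩ := mem_seam.1 hp
      exact Finset.mem_filter.2 ⟨Finset.mem_union_right _ hp,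
        onArc_of_le_of_lt (hbU _ (hP.mem (by omega))).le (hP.lt (by omega) (by omega))⟩
  have hcover₂ : (matching w₂ ∪ seam Q m s).filter (OnArc · (b + c)) ⊆ seam Q m s := by
    intro p hp
    obtain ⟨hp, hon⟩ := Finset.mem_filter.1 hp
    refine (Finset.mem_union.1 hp).resolve_left fun hp => ?_
    exact (isCyclicMatching_matching w₂).not_onArc p hp _ (Finset.mem_sdiff.1 hb).2 hon
  have hab' : (a, b) ∉ seam P m s := fun h => by
    obtain ⟨t, ht, he⟩ := mem_seam.1 h
    obtain ⟨rfl, -⟩ := Prod.mk.inj he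
    have ha := hP.mem (i := m - 1 - t) (by omega)
    exact (Finset.mem_sdiff.1 ha).2 (fst_mem_matchedPos hab)
  have h₁ := Finset.card_le_card hcover₁
  have h₂ := Finset.card_le_card hcover₂
  rw [hshift, card_filter_onArc_shiftPairs] at h₂
  rw [Finset.card_insert_of_notMem hab', hP.card_seam hs] at h₁
  rw [hQ.card_seam hs] at h₂
  omega

lemma exists_mem_seam_of_mem_flipSet (hQ : IsSortedEnum (unmatchedPos w₂) m Q)
    (hone₁ : ∀ z ∈ unmatchedPos w₁, w₁ z = true) (hone₂ : ∀ z ∈ unmatchedPos w₂, w₂ z = true)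
    (hc : rot c (wT w₁ r) = wT w₂ r) {β : Fin n} (hβ : β ∈ flipSet w₂ r)
    (hβc : β - c ∉ flipSet w₁ r) : ∃ γ, (β, γ) ∈ seam Q m (min r (m - r)) := by
  have hM₂ := hQ.matching_wT hone₂ r
  have hβ0 : wT w₂ r β = false := wT_eq_false_of_mem_flipSet hβ
  -- otherwise `β - c` would be a `0` left unmatched in `wT w₁ r`, hence a flipped position
  have hβM : β ∈ matchedPos (matching (wT w₂ r)) := by
    by_contra h
    have h' : β - c ∈ unmatchedPos (wT w₁ r) := by
      rw [← mem_unmatchedPos_rot, hc]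
      simpa [unmatchedPos] using h
    refine hβc (mem_flipSet_of_wT_eq_false hone₁ (unmatchedPos_wT_subset hone₁ r h') ?_)
    rw [← hβ0, ← hc, rot]
  rw [hM₂, matchedPos_union, Finset.mem_union] at hβM
  obtain ⟨p, hp, hpβ⟩ := mem_matchedPos.1
    (hβM.resolve_left (Finset.mem_sdiff.1 (flipSet_subset_unmatchedPos hβ)).2)
  refine hpβ.elim (fun h => ⟨p.2, h ▸ hp⟩) fun h => ?_
  have := ((isCyclicMatching_matching (wT w₂ r)).letters p (hM₂ ▸ Finset.mem_union_right _ hp)).2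
  rw [h, hβ0] at this
  exact absurd this Bool.false_ne_true

/-- The seam pair `(β, γ)` of `w₂_r` has `γ < β`; shifted back by `c` it is a pair of the
matching of `w₁`, so `β - c < γ - c`. -/
lemma pos_and_le_of_mem_flipSet (hone₁ : ∀ z ∈ unmatchedPos w₁, w₁ z = true)
    (hone₂ : ∀ z ∈ unmatchedPos w₂, w₂ z = true)
    (hm : (unmatchedPos w₁).card = (unmatchedPos w₂).card) (hc : rot c (wT w₁ r) = wT w₂ r)
    {β : Fin n} (hβ : β ∈ flipSet w₂ r) (hβc : β - c ∉ flipSet w₁ r) :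
    0 < c.val ∧ c ≤ β := by
  obtain ⟨P, hP⟩ := exists_isSortedEnum (unmatchedPos w₁)
  obtain ⟨Q, hQ⟩ := exists_isSortedEnum (unmatchedPos w₂)
  rw [← hm] at hQ
  set m := (unmatchedPos w₁).card
  have hshift : matching w₂ ∪ seam Q m (min r (m - r)) =
      shiftPairs c (matching w₁ ∪ seam P m (min r (m - r))) := by
    rw [← hP.matching_wT hone₁ r, ← hQ.matching_wT hone₂ r, ← hc, matching_rot]
  obtain ⟨γ, hβγ⟩ := exists_mem_seam_of_mem_flipSet hQ hone₁ hone₂ hc hβ hβc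
  obtain ⟨t, ht, hβγ'⟩ := mem_seam.1 hβγ
  obtain ⟨rfl, rfl⟩ := Prod.mk.inj hβγ'
  have hγβ : Q t < Q (m - 1 - t) := hQ.lt (by omega) (by omega)
  have hpair : (Q (m - 1 - t) - c, Q t - c) ∈ matching w₁ := by
    have := mem_shiftPairs.1 (hshift ▸ Finset.mem_union_right _ hβγ)
    refine (Finset.mem_union.1 this).resolve_right fun h => hβc ?_
    obtain ⟨t', ht', he⟩ := mem_seam.1 h
    rw [← (Prod.mk.inj he).1, hP.mem_flipSet_iff (by omega)]
    omega
  have := lt_of_mem_matching_of_shiftPairs_eq hP hQ (by omega) hshift hpair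
    (by simpa using hQ.mem (i := t) (by omega))
  simp only [Fin.lt_def, Fin.le_def, Fin.val_sub_eq_ite] at this hγβ ⊢
  split_ifs at this <;> omega

lemma lexLT_rot_of_image_flipSet_ne (hone₁ : ∀ z ∈ unmatchedPos w₁, w₁ z = true)
    (hone₂ : ∀ z ∈ unmatchedPos w₂, w₂ z = true)
    (hm : (unmatchedPos w₁).card = (unmatchedPos w₂).card) (hwt : wt w₁ = wt w₂)
    (hc : rot c (wT w₁ r) = wT w₂ r) (hne : (flipSet w₁ r).image (· + c) ≠ flipSet w₂ r) :
    LexLT (rot c w₁) w₂ := by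
  have hx : ∀ z ∈ (flipSet w₁ r).image (· + c), wT w₂ r z = false := fun z hz => by
    rw [← hc, rot]
    exact wT_eq_false_of_mem_flipSet (mem_image_add_iff.1 hz)
  have hcard : ((flipSet w₁ r).image (· + c)).card = (flipSet w₂ r).card := by
    have h₁ := wt_fillOnes (A := flipSet w₁ r) fun z => wT_eq_false_of_mem_flipSet
    have h₂ := wt_fillOnes (A := flipSet w₂ r) fun z => wT_eq_false_of_mem_flipSet
    rw [fillOnes_wT hone₁] at h₁
    rw [fillOnes_wT hone₂, ← hc, wt_rot] at h₂
    rw [Finset.card_image_of_injective _ (add_left_injective c)]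
    omega
  rw [← fillOnes_wT hone₁ r, rot_fillOnes, hc]
  conv_rhs => rw [← fillOnes_wT hone₂ r]
  refine lexLT_fillOnes hx ?_ fun y hy z hz => ?_
  · by_contra h
    exact hne (Finset.eq_of_subset_of_card_le (Finset.sdiff_eq_empty_iff_subset.1
      (Finset.not_nonempty_iff_eq_empty.1 h)) hcard.ge)
  · obtain ⟨hyT, hyF⟩ := Finset.mem_sdiff.1 hy
    obtain ⟨hzF, hzT⟩ := Finset.mem_sdiff.1 hz
    have hz' := (pos_and_le_of_mem_flipSet hone₁ hone₂ hm hc hzF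
      fun h => hzT (mem_image_add_iff.2 h)).2
    have hy' := pos_and_le_of_mem_flipSet hone₂ hone₁ hm.symm (rot_neg_eq hc)
      (mem_image_add_iff.1 hyT) (by rwa [sub_neg_eq_add, sub_add_cancel])
    simp only [Fin.lt_def, Fin.le_def, Fin.val_sub_eq_ite, Fin.val_neg] at hy' hz' ⊢
    split_ifs at hy' <;> omega

theorem rot_eq_of_rot_wT_eq (hL₁ : IsLyndon w₁) (hL₂ : IsLyndon w₂)
    (hone₁ : ∀ z ∈ unmatchedPos w₁, w₁ z = true) (hone₂ : ∀ z ∈ unmatchedPos w₂, w₂ z = true)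
    (hm : (unmatchedPos w₁).card = (unmatchedPos w₂).card) (hwt : wt w₁ = wt w₂)
    (hc : rot c (wT w₁ r) = wT w₂ r) : rot c w₁ = w₂ := by
  have hT : (flipSet w₁ r).image (· + c) = flipSet w₂ r := by
    by_contra hne
    have hne' : (flipSet w₂ r).image (· + -c) ≠ flipSet w₁ r := fun h => hne <| by
      rw [← h, Finset.image_image]
      simp [Function.comp_def]
    have h₁ := lexLT_rot_of_image_flipSet_ne hone₁ hone₂ hm hwt hc hne
    have h₂ := lexLT_rot_of_image_flipSet_ne hone₂ hone₁ hm.symm hwt.symm (rot_neg_eq hc) hne'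
    exact LexLT.irrefl w₁ <|
      ((hL₁ c).trans_lexLT h₁).trans_lexLE (hL₂ (-c)) |>.trans h₂
  rw [← fillOnes_wT hone₁ r, rot_fillOnes, hc, hT, fillOnes_wT hone₂]

end Rigidity

theorem descending_chains_do_not_merge_general (n : ℕ) [NeZero n] (u : Necklace n) (k : ℕ)
    (hk : n < 2 * k)
    (v v' : Necklace n) (hv : rank v = k) (hv' : rank v' = k)
    (w w' : Word n)
    (hwv : nec w = v) (hwL : IsLyndon w) (hwm : (unmatchedPos w).card = 2 * k - n)
    (hw'v : nec w' = v') (hw'L : IsLyndon w') (hw'm : (unmatchedPos w').card = 2 * k - n)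
    (hr : nec (wT w (k - rank u)) = u) (hr' : nec (wT w' (k - rank u)) = u) :
    v = v' := by
  have hwt : wt w = k := by rw [← rank_nec, hwv, hv]
  have hwt' : wt w' = k := by rw [← rank_nec, hw'v, hv']
  have hone : ∀ z ∈ unmatchedPos w, w z = true := fun z =>
    eq_true_of_mem_unmatchedPos (by omega) (by rw [hwm, hwt])
  have hone' : ∀ z ∈ unmatchedPos w', w' z = true := fun z =>
    eq_true_of_mem_unmatchedPos (by omega) (by rw [hw'm, hwt'])
  obtain ⟨c, hc⟩ : ∃ c, rot c (wT w (k - rank u)) = wT w' (k - rank u) :=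
    Quotient.exact (hr.trans hr'.symm)
  rw [← hwv, ← hw'v, ← rot_eq_of_rot_wT_eq hwL hw'L hone hone' (hwm.trans hw'm.symm)
    (hwt.trans hwt'.symm) hc, nec_rot]

/-- Descending chains do not merge (injectivity on the lower half of
ranks): let `u` be a necklace and `k` an integer with `2k > n` and `rank u ≤ k`.  If `v`
and `v'` are necklaces of rank `k` with Lyndon representatives `w` and `w'` respectively,
each having exactly `2k − n` unmatched positions, and `u` is both the necklace of `w_r`
and of `w'_r` where `r = k − rank u`, then `v = v'`. -/
theorem descending_chains_do_not_merge (n : ℕ) [NeZero n] (u : Necklace n) (k : ℕ)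
    (hk : n < 2 * k) (hu : rank u ≤ k)
    (v v' : Necklace n) (hv : rank v = k) (hv' : rank v' = k)
    (w w' : Word n)
    (hwv : nec w = v) (hwL : IsLyndon w) (hwm : (unmatchedPos w).card = 2 * k - n)
    (hw'v : nec w' = v') (hw'L : IsLyndon w') (hw'm : (unmatchedPos w').card = 2 * k - n)
    (hr : nec (wT w (k - rank u)) = u) (hr' : nec (wT w' (k - rank u)) = u) :
    v = v' :=
  descending_chains_do_not_merge_general n u k hk v v' hv hv' w w' hwv hwL hwm hw'v hw'L hw'm hr hr'
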